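/- arXiv:math/0607027 — 2 statements merged into one kernel-verified Lean document; each statement's English description precedes it below -/
import Mathlib

section
/- The function a₀¹(z) := ∫₀^∞ s e^{-s²/2} / √(s² + z²) ds satisfies a₀¹(z) ≤ a₀¹(0) = √(π/2) for all z ∈ ℝ, and a₀¹(z) · |z| → 1 as |z| → ∞. -/
/-!
Since `s ≤ √(s² + z²)`, the integrand is dominated by `e^{-s²/2}`, with equality at `z = 0`;
this gives the bound and the value of the Gaussian half-line integral `√(π/2)`. Since also
`|z| ≤ √(s² + z²)`, the functions `|z| s e^{-s²/2} / √(s² + z²)` are dominated by `s e^{-s²/2}`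
and converge to it pointwise as `|z| → ∞`, so by dominated convergence `|z| a₀¹(z)` tends to
`∫₀^∞ s e^{-s²/2} ds = 1`.
-/

open MeasureTheory Real Filter Set Topology

theorem integral_mul_exp_neg_mul_sq_Ioi {b : ℝ} (hb : 0 < b) :
    ∫ x in Ioi 0, x * exp (-b * x ^ 2) = (2 * b)⁻¹ := by
  rw [← Complex.ofReal_inj, ← integral_complex_ofReal]
  push_cast
  exact integral_mul_cexp_neg_mul_sq (by simpa using hb)

theorem exp_neg_sq_div_two (s : ℝ) : exp (-s ^ 2 / 2) = exp (-(1 / 2) * s ^ 2) := by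
  ring_nf

theorem integrable_exp_neg_sq_div_two : Integrable fun s : ℝ => exp (-s ^ 2 / 2) := by
  simpa only [exp_neg_sq_div_two] using integrable_exp_neg_mul_sq one_half_pos

theorem integrable_mul_exp_neg_sq_div_two : Integrable fun s : ℝ => s * exp (-s ^ 2 / 2) := by
  simpa only [exp_neg_sq_div_two] using integrable_mul_exp_neg_mul_sq one_half_pos

theorem integral_exp_neg_sq_div_two_Ioi : ∫ s in Ioi 0, exp (-s ^ 2 / 2) = √(π / 2) := by
  rw [funext exp_neg_sq_div_two, integral_gaussian_Ioi, show π / (1 / 2) = 2 ^ 2 * (π / 2) by ring,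
    sqrt_mul (by positivity), sqrt_sq zero_le_two]
  ring

theorem integral_mul_exp_neg_sq_div_two_Ioi : ∫ s in Ioi 0, s * exp (-s ^ 2 / 2) = 1 := by
  simp only [exp_neg_sq_div_two, integral_mul_exp_neg_mul_sq_Ioi one_half_pos]
  norm_num

theorem div_sqrt_sq_add_sq_le_one (x y : ℝ) : x / √(x ^ 2 + y ^ 2) ≤ 1 :=
  div_le_one_of_le₀ ((le_abs_self x).trans (abs_le_sqrt (le_add_of_nonneg_right (sq_nonneg y))))
    (sqrt_nonneg _)

theorem abs_div_sqrt_sq_add_sq_le_one (x y : ℝ) : |y| / √(x ^ 2 + y ^ 2) ≤ 1 :=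
  div_le_one_of_le₀ (abs_le_sqrt (le_add_of_nonneg_left (sq_nonneg x))) (sqrt_nonneg _)

theorem tendsto_abs_div_sqrt_sq_add_sq_cocompact (s : ℝ) :
    Tendsto (fun z : ℝ => |z| / √(s ^ 2 + z ^ 2)) (cocompact ℝ) (𝓝 1) := by
  have hsq : Tendsto (fun z : ℝ => z ^ 2) (cocompact ℝ) atTop :=
    ((tendsto_pow_atTop two_ne_zero).comp tendsto_norm_cocompact_atTop).congr fun z => by
      rw [Function.comp_apply, norm_eq_abs, sq_abs]
  have hsum : Tendsto (fun z : ℝ => s ^ 2 + z ^ 2) (cocompact ℝ) atTop :=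
    tendsto_atTop_add_const_left _ _ hsq
  have hsqrt : Tendsto (fun z : ℝ => √(1 - s ^ 2 / (s ^ 2 + z ^ 2))) (cocompact ℝ) (𝓝 1) := by
    simpa only [sub_zero, sqrt_one] using
      ((tendsto_const_nhds (x := (1 : ℝ))).sub
        ((tendsto_const_nhds (x := s ^ 2)).div_atTop hsum)).sqrt
  refine hsqrt.congr' ?_
  filter_upwards [hsum.eventually_gt_atTop 0] with z hz
  rw [← sqrt_sq_eq_abs, ← sqrt_div' _ hz.le]
  congr 1
  field_simp
  ring

section Kernel

variable {μ : Measure ℝ}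

theorem integral_mul_div_sqrt_sq_add_sq_le {w : ℝ → ℝ} (hw : Integrable w μ) (hw0 : 0 ≤ᵐ[μ] w)
    (z : ℝ) : ∫ s, s * w s / √(s ^ 2 + z ^ 2) ∂μ ≤ ∫ s, w s ∂μ := by
  have hrw : ∀ s, s * w s / √(s ^ 2 + z ^ 2) = w s * (s / √(s ^ 2 + z ^ 2)) := fun s => by ring
  simp only [hrw]
  refine integral_mono_ae ?_ hw ?_
  · refine hw.mul_of_top_left <| memLp_top_of_bound
      (Measurable.aestronglyMeasurable (by fun_prop)) 1 (ae_of_all _ fun s => ?_)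
    rw [norm_div, norm_eq_abs, norm_eq_abs, abs_of_nonneg (sqrt_nonneg _)]
    simpa [abs_sq] using div_sqrt_sq_add_sq_le_one |s| z
  · filter_upwards [hw0] with s hs
    exact mul_le_of_le_one_right hs (div_sqrt_sq_add_sq_le_one s z)

theorem tendsto_integral_div_sqrt_sq_add_sq_mul_abs {f : ℝ → ℝ} (hf : Integrable f μ) :
    Tendsto (fun z : ℝ => (∫ s, f s / √(s ^ 2 + z ^ 2) ∂μ) * |z|) (cocompact ℝ)
      (𝓝 (∫ s, f s ∂μ)) := by
  have : (cocompact ℝ).IsCountablyGenerated := by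
    rw [cocompact_eq_atBot_atTop]; infer_instance
  have hrw : ∀ z s, f s / √(s ^ 2 + z ^ 2) * |z| = f s * (|z| / √(s ^ 2 + z ^ 2)) :=
    fun z s => by ring
  simp only [← integral_mul_const, hrw]
  refine tendsto_integral_filter_of_dominated_convergence (fun s => ‖f s‖)
    (Eventually.of_forall fun z =>
      hf.aestronglyMeasurable.mul (Measurable.aestronglyMeasurable (by fun_prop)))
    (Eventually.of_forall fun z => ae_of_all _ fun s => ?_) hf.norm
    (ae_of_all _ fun s => by
      simpa using (tendsto_abs_div_sqrt_sq_add_sq_cocompact s).const_mul (f s))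
  rw [norm_mul, norm_div, norm_eq_abs |z|, abs_abs, norm_eq_abs √_, abs_of_nonneg (sqrt_nonneg _)]
  exact mul_le_of_le_one_right (norm_nonneg _) (abs_div_sqrt_sq_add_sq_le_one s z)

end Kernel

theorem setIntegral_mul_div_sqrt_sq_add_zero_sq (w : ℝ → ℝ) :
    ∫ s in Ioi 0, s * w s / √(s ^ 2 + 0 ^ 2) = ∫ s in Ioi 0, w s := by
  refine setIntegral_congr_fun measurableSet_Ioi fun s (hs : 0 < s) => ?_
  rw [zero_pow two_ne_zero, add_zero, sqrt_sq hs.le, mul_div_cancel_left₀ _ hs.ne']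

theorem a0_one_properties
    (a : ℝ → ℝ)
    (ha : ∀ z : ℝ, a z = ∫ s in Set.Ioi (0 : ℝ),
        s * Real.exp (-s ^ 2 / 2) / Real.sqrt (s ^ 2 + z ^ 2)) :
    (∀ z : ℝ, a z ≤ a 0) ∧
    a 0 = Real.sqrt (π / 2) ∧
    Tendsto (fun z : ℝ => a z * |z|) (cocompact ℝ) (nhds 1) := by
  have ha0 : a 0 = √(π / 2) := by
    rw [ha, setIntegral_mul_div_sqrt_sq_add_zero_sq, integral_exp_neg_sq_div_two_Ioi]
  refine ⟨fun z => ?_, ha0, ?_⟩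
  · rw [ha0, ha, ← integral_exp_neg_sq_div_two_Ioi]
    exact integral_mul_div_sqrt_sq_add_sq_le integrable_exp_neg_sq_div_two.integrableOn
      (ae_of_all _ fun s => (exp_pos _).le) z
  · simp only [ha]
    rw [← integral_mul_exp_neg_sq_div_two_Ioi]
    exact tendsto_integral_div_sqrt_sq_add_sq_mul_abs integrable_mul_exp_neg_sq_div_two.integrableOn
end

section
/- For each integer ℓ ≥ 0 and B > 0, define a_ℓ^B(z) := (B^{ℓ+1}/(2^ℓ ℓ!)) ∫₀^∞ s^{2ℓ+1} e^{-B s²/2} / √(s² + z²) ds. Then for every ℓ ≥ 1 and every z ∈ ℝ, a_ℓ^B(z) ≤ a_{ℓ−1}^B(z). -/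
/-! The weights `w_k(s) = B^{k+1} / (2^k k!) · s^{2k+1} e^{-B s²/2}` are probability densities on
`(0, ∞)`, and `a_k(z) = ∫ w_k(s) / √(s² + z²) ds`. The difference
`w_k - w_{k+1} = w_k · (1 - B s² / (2(k+1)))` changes sign once, from `+` to `-`, at
`s₀² = 2(k+1)/B`, while `s ↦ 1/√(s² + z²)` decreases; hence
`(w_k - w_{k+1})(s) · (1/√(s² + z²) - 1/√(s₀² + z²)) ≥ 0`. Integrating, the constant
`1/√(s₀² + z²)` drops out because both weights have mass one, leaving `a_{k+1}(z) ≤ a_k(z)`. -/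

open MeasureTheory Real

noncomputable def aLandau (B : ℝ) (ℓ : ℕ) (z : ℝ) : ℝ :=
  (B ^ (ℓ + 1) / (2 ^ ℓ * (Nat.factorial ℓ))) *
    ∫ s in Set.Ioi (0 : ℝ), s ^ (2 * ℓ + 1) * Real.exp (-B * s ^ 2 / 2) /
      Real.sqrt (s ^ 2 + z ^ 2)

open Set Nat

theorem integral_pow_two_mul_add_one_mul_exp_neg_mul_sq {b : ℝ} (hb : 0 < b) (k : ℕ) :
    ∫ s in Ioi (0 : ℝ), s ^ (2 * k + 1) * exp (-b * s ^ 2) = k ! / (2 * b ^ (k + 1)) := by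
  have h := integral_rpow_mul_exp_neg_mul_rpow two_pos (q := 2 * k + 1)
    (by linarith [k.cast_nonneg (α := ℝ)]) hb
  have hq : (2 * (k : ℝ) + 1 + 1) / 2 = (k + 1 : ℕ) := by push_cast; ring
  rw [neg_div, hq, rpow_neg hb.le, rpow_natCast, Nat.cast_succ, Gamma_nat_eq_factorial] at h
  norm_cast at h
  rw [h]
  field_simp

theorem integrableOn_pow_mul_exp_neg_mul_sq {b : ℝ} (hb : 0 < b) (n : ℕ) :
    IntegrableOn (fun s : ℝ => s ^ n * exp (-b * s ^ 2)) (Ioi 0) := by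
  simpa using integrableOn_rpow_mul_exp_neg_mul_sq hb (s := n)
    (by linarith [n.cast_nonneg (α := ℝ)])

theorem integral_mul_le_integral_mul_of_sign_change {α : Type*} [MeasurableSpace α]
    {μ : Measure α} {f g ψ : α → ℝ} (m : ℝ) (hf : Integrable f μ) (hg : Integrable g μ)
    (hfψ : Integrable (fun x => f x * ψ x) μ) (hgψ : Integrable (fun x => g x * ψ x) μ)
    (hfg : ∫ x, f x ∂μ = ∫ x, g x ∂μ) (hsign : ∀ᵐ x ∂μ, 0 ≤ (f x - g x) * (ψ x - m)) :
    ∫ x, g x * ψ x ∂μ ≤ ∫ x, f x * ψ x ∂μ := by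
  have hexpand : (fun x => (f x - g x) * (ψ x - m)) =
      fun x => (f x * ψ x - g x * ψ x) - m * (f x - g x) := by
    ext x; ring
  have h := integral_nonneg_of_ae hsign
  have hdiff : Integrable (fun x => f x * ψ x - g x * ψ x) μ := hfψ.sub hgψ
  have hdiff' : Integrable (fun x => m * (f x - g x)) μ := (hf.sub hg).const_mul m
  rw [hexpand, integral_sub hdiff hdiff', integral_sub hfψ hgψ, integral_const_mul,
    integral_sub hf hg, hfg, sub_self, mul_zero, sub_zero] at h
  linarith

noncomputable def landauWeight (B : ℝ) (k : ℕ) (s : ℝ) : ℝ :=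
  B ^ (k + 1) / (2 ^ k * k !) * (s ^ (2 * k + 1) * exp (-(B / 2) * s ^ 2))

theorem aLandau_eq_integral_landauWeight (B : ℝ) (k : ℕ) (z : ℝ) :
    aLandau B k z = ∫ s in Ioi 0, landauWeight B k s * (√(s ^ 2 + z ^ 2))⁻¹ := by
  rw [aLandau, ← integral_const_mul]
  congr 1 with s
  rw [landauWeight]
  ring_nf

section landauWeight

variable {B : ℝ} (hB : 0 < B) (k : ℕ)
include hB

theorem integrableOn_landauWeight : IntegrableOn (landauWeight B k) (Ioi 0) :=
  (integrableOn_pow_mul_exp_neg_mul_sq (half_pos hB) _).const_mul _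

theorem integral_landauWeight : ∫ s in Ioi 0, landauWeight B k s = 1 := by
  simp only [landauWeight]
  rw [integral_const_mul, integral_pow_two_mul_add_one_mul_exp_neg_mul_sq (half_pos hB), div_pow]
  field_simp
  ring

theorem integrableOn_landauWeight_mul_inv_sqrt (z : ℝ) :
    IntegrableOn (fun s => landauWeight B k s * (√(s ^ 2 + z ^ 2))⁻¹) (Ioi 0) := by
  refine ((integrableOn_pow_mul_exp_neg_mul_sq (half_pos hB) (2 * k)).const_mul
    (B ^ (k + 1) / (2 ^ k * k !))).mono' (by unfold landauWeight; fun_prop) ?_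
  filter_upwards [ae_restrict_mem measurableSet_Ioi] with s (hs : 0 < s)
  have hsqrt : s ≤ √(s ^ 2 + z ^ 2) := le_sqrt_of_sq_le (by nlinarith)
  have hw : 0 ≤ landauWeight B k s := by unfold landauWeight; positivity
  calc ‖landauWeight B k s * (√(s ^ 2 + z ^ 2))⁻¹‖
      = landauWeight B k s / √(s ^ 2 + z ^ 2) := by
        rw [Real.norm_of_nonneg (by positivity), div_eq_mul_inv]
    _ ≤ landauWeight B k s / s := div_le_div_of_nonneg_left hw hs hsqrt
    _ = B ^ (k + 1) / (2 ^ k * k !) * (s ^ (2 * k) * exp (-(B / 2) * s ^ 2)) := by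
        rw [landauWeight, pow_succ]; field_simp; ring

theorem landauWeight_sub_succ (s : ℝ) :
    landauWeight B k s - landauWeight B (k + 1) s =
      landauWeight B k s * (B / (2 * (k + 1))) * (2 * (k + 1) / B - s ^ 2) := by
  have hB' := hB.ne'
  simp only [landauWeight, pow_succ, Nat.factorial_succ]
  push_cast
  field_simp
  ring

theorem landauWeight_sub_succ_mul_inv_sqrt_sub_nonneg (z : ℝ) {s : ℝ} (hs : 0 < s) :
    0 ≤ (landauWeight B k s - landauWeight B (k + 1) s) *
      ((√(s ^ 2 + z ^ 2))⁻¹ - (√(2 * (k + 1) / B + z ^ 2))⁻¹) := by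
  rw [landauWeight_sub_succ hB]
  have ht : 0 < 2 * (k + 1) / B := by positivity
  have hw : 0 ≤ landauWeight B k s * (B / (2 * (k + 1))) := by
    unfold landauWeight; positivity
  rcases le_total (s ^ 2) (2 * (k + 1) / B) with h | h
  · exact mul_nonneg (mul_nonneg hw (sub_nonneg.2 h))
      (sub_nonneg.2 (inv_anti₀ (sqrt_pos.2 (by positivity)) (sqrt_le_sqrt (by linarith))))
  · exact mul_nonneg_of_nonpos_of_nonpos (mul_nonpos_of_nonneg_of_nonpos hw (sub_nonpos.2 h))
      (sub_nonpos.2 (inv_anti₀ (sqrt_pos.2 (by positivity)) (sqrt_le_sqrt (by linarith))))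

end landauWeight

theorem aLandau_antitone (B : ℝ) (hB : 0 < B) (ℓ : ℕ) (hℓ : 1 ≤ ℓ) (z : ℝ) :
    aLandau B ℓ z ≤ aLandau B (ℓ - 1) z := by
  obtain ⟨k, rfl⟩ : ∃ k, ℓ = k + 1 := ⟨ℓ - 1, by omega⟩
  rw [Nat.add_sub_cancel, aLandau_eq_integral_landauWeight, aLandau_eq_integral_landauWeight]
  refine integral_mul_le_integral_mul_of_sign_change (√(2 * (k + 1) / B + z ^ 2))⁻¹
    (integrableOn_landauWeight hB k) (integrableOn_landauWeight hB (k + 1))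
    (integrableOn_landauWeight_mul_inv_sqrt hB k z)
    (integrableOn_landauWeight_mul_inv_sqrt hB (k + 1) z)
    (by rw [integral_landauWeight hB, integral_landauWeight hB]) ?_
  filter_upwards [ae_restrict_mem measurableSet_Ioi] with s hs
  exact landauWeight_sub_succ_mul_inv_sqrt_sub_nonneg hB k z hs
end
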